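/- arXiv:1208.5361 — 2 statements merged into one kernel-verified Lean document; each statement's English description precedes it below -/
import Mathlib

section
/- Let n ≥ 1 and let f : ℝⁿ → ℝ be a smooth convex function with f(0) = 0, ∇f(0) = 0, and positive definite Hessian D²f(0). Then lim_{t → 0⁺} t^{-n/2} · ∫_{{x : f(x) < t}} √(1 + ‖∇f(x)‖²) dx = (√2)ⁿ · ω_n / √(det D²f(0)). -/
open MeasureTheory Filter
open scoped RealInnerProductSpace Topology

/-- The Hessian matrix of `f : ℝⁿ → ℝ` at a point `x`, with entries the second
partial derivatives of `f`. -/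
noncomputable def hessianMatrix {n : ℕ} (f : EuclideanSpace ℝ (Fin n) → ℝ)
    (x : EuclideanSpace ℝ (Fin n)) : Matrix (Fin n) (Fin n) ℝ :=
  Matrix.of fun i j =>
    iteratedFDeriv ℝ 2 f x ![EuclideanSpace.single i 1, EuclideanSpace.single j 1]

/-!
Near the origin, second-order Taylor expansion gives `(1 - ε) q ≤ f ≤ (1 + ε) q` for
`q x = ½ xᵀ H x`, `H = D²f(0)`. Convexity together with this quadratic growth forces the sublevel
sets `{f < t}` into arbitrarily small balls as `t → 0⁺`, so for small `t` they are squeezed between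
the ellipsoids `{q < t / (1 ± ε)}`, of volume `(2t / (1 ± ε))^{n/2} ω_n / √(det H)`, while the area
element `√(1 + ‖∇f‖²)` lies in `[1, 1 + ε]` on them. Letting `ε → 0` gives the limit.
-/

open Asymptotics Matrix Set

theorem tendsto_of_forall_eventually_mem_Icc {α β γ : Type*} [TopologicalSpace γ] [LinearOrder γ]
    [OrderTopology γ] {l : Filter α} {l' : Filter β} [l'.NeBot] {u : α → γ} {a b : β → γ}
    {L : γ} (ha : Tendsto a l' (𝓝 L)) (hb : Tendsto b l' (𝓝 L))
    (h : ∀ᶠ ε in l', ∀ᶠ x in l, u x ∈ Icc (a ε) (b ε)) : Tendsto u l (𝓝 L) := by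
  refine tendsto_order.2 ⟨fun c hc => ?_, fun c hc => ?_⟩
  · obtain ⟨ε, hε, hu⟩ := ((ha.eventually (eventually_gt_nhds hc)).and h).exists
    exact hu.mono fun x hx => hε.trans_le hx.1
  · obtain ⟨ε, hε, hu⟩ := ((hb.eventually (eventually_lt_nhds hc)).and h).exists
    exact hu.mono fun x hx => hx.2.trans_lt hε

theorem mul_measureReal_le_setIntegral_and_le {X : Type*} [MeasurableSpace X] {μ : Measure X}
    {A S B : Set X} {g : X → ℝ} {b c : ℝ} (hb : 0 ≤ b) (hbc : b ≤ c) (hAS : A ⊆ S) (hSB : S ⊆ B)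
    (hB : μ B ≠ ⊤) (hS : MeasurableSet S) (hg : AEStronglyMeasurable g (μ.restrict S))
    (hbg : ∀ x ∈ S, b ≤ g x) (hgc : ∀ x ∈ S, g x ≤ c) :
    b * μ.real A ≤ ∫ x in S, g x ∂μ ∧ ∫ x in S, g x ∂μ ≤ c * μ.real B := by
  have hSfin : μ S ≠ ⊤ := ne_top_of_le_ne_top hB (measure_mono hSB)
  have hgint : IntegrableOn g S μ := by
    have := isFiniteMeasure_restrict.2 hSfin
    refine Integrable.of_bound hg c ?_
    filter_upwards [ae_restrict_mem hS] with x hx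
    rw [Real.norm_of_nonneg (hb.trans (hbg x hx))]
    exact hgc x hx
  constructor
  · calc b * μ.real A ≤ b * μ.real S := by gcongr
      _ ≤ ∫ x in S, g x ∂μ := setIntegral_ge_of_const_le_real hS hSfin hbg hgint
  · have := hb.trans hbc
    calc ∫ x in S, g x ∂μ ≤ ∫ _ in S, c ∂μ :=
          setIntegral_mono_on hgint (integrableOn_const hSfin) hS hgc
      _ = c * μ.real S := by rw [setIntegral_const, smul_eq_mul, mul_comm]
      _ ≤ c * μ.real B := by gcongr

theorem tendsto_setOf_lt_smallSets_of_mul_norm_sq_le {E : Type*} [SeminormedAddCommGroup E]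
    {q : E → ℝ} {m : ℝ} (hm : 0 < m) (hq : ∀ x, m * ‖x‖ ^ 2 ≤ q x) :
    Tendsto (fun s => {x | q x < s}) (𝓝 0) (𝓝 (0 : E)).smallSets := by
  refine tendsto_smallSets_iff.2 fun U hU => ?_
  obtain ⟨δ, hδ, hball⟩ := Metric.mem_nhds_iff.1 hU
  filter_upwards [eventually_lt_nhds (by positivity : (0 : ℝ) < m * δ ^ 2)] with s hs x hx
  have hx2 : ‖x‖ ^ 2 < δ ^ 2 := lt_of_mul_lt_mul_left ((hq x).trans_lt (hx.out.trans hs)) hm.le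
  exact hball (mem_ball_zero_iff.2 ((pow_lt_pow_iff_left₀ (norm_nonneg x) hδ.le two_ne_zero).1 hx2))

section ConvexSublevel

variable {E : Type*} [NormedAddCommGroup E] [NormedSpace ℝ E] {f : E → ℝ}

theorem ConvexOn.setOf_lt_subset_ball (hf : ConvexOn ℝ univ f) {c : E} {r t : ℝ}
    (hr : 0 < r) (hc : f c < t) (hsphere : ∀ y ∈ Metric.sphere c r, t ≤ f y) :
    {x | f x < t} ⊆ Metric.ball c r := by
  intro x hx
  by_contra hxr
  have hd : 0 < dist x c := hr.trans_le (not_lt.1 hxr)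
  set θ := r / dist x c
  have hy : c + θ • (x - c) ∈ Metric.sphere c r := by
    rw [mem_sphere_iff_norm, add_sub_cancel_left, norm_smul, ← dist_eq_norm,
      Real.norm_of_nonneg (by positivity), div_mul_cancel₀ _ hd.ne']
  have hseg : c + θ • (x - c) ∈ segment ℝ c x := by
    refine ⟨1 - θ, θ, sub_nonneg.2 ((div_le_one hd).2 (not_lt.1 hxr)), by positivity,
      by ring, ?_⟩
    module
  exact (hsphere _ hy).not_gt ((hf.le_on_segment trivial trivial hseg).trans_lt (max_lt hc hx))

theorem ConvexOn.tendsto_setOf_lt_smallSets (hf : ConvexOn ℝ univ f) {c : E} {m : ℝ}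
    (hm : 0 < m) (hgrowth : ∀ᶠ x in 𝓝 c, f c + m * dist x c ^ 2 ≤ f x) :
    Tendsto (fun t => {x | f x < t}) (𝓝[>] (f c)) (𝓝 c).smallSets := by
  refine tendsto_smallSets_iff.2 fun U hU => ?_
  obtain ⟨δ, hδ, hball⟩ := Metric.mem_nhds_iff.1 (inter_mem hU hgrowth)
  have hsphere : ∀ y ∈ Metric.sphere c (δ / 2), f c + m * (δ / 2) ^ 2 ≤ f y := fun y hy => by
    rw [← Metric.mem_sphere.1 hy]
    refine (hball ?_).2
    rw [Metric.mem_ball, Metric.mem_sphere.1 hy]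
    linarith
  have hlt : f c < f c + m * (δ / 2) ^ 2 := lt_add_of_pos_right _ (by positivity)
  filter_upwards [Ioo_mem_nhdsGT hlt] with t ht
  have hsub := hf.setOf_lt_subset_ball (half_pos hδ) ht.1 fun y hy => ht.2.le.trans (hsphere y hy)
  exact fun x hx => (hball (Metric.ball_subset_ball (half_le_self hδ.le) (hsub hx))).1

end ConvexSublevel

theorem eventually_setOf_lt_subset_and_subset {X : Type*} [TopologicalSpace X] {f q : X → ℝ}
    {x₀ : X} {ε : ℝ} (hε₀ : 0 ≤ ε) (hε₁ : ε < 1)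
    (happrox : ∀ᶠ x in 𝓝 x₀, |f x - q x| ≤ ε * q x)
    (hf : Tendsto (fun t => {x | f x < t}) (𝓝[>] 0) (𝓝 x₀).smallSets)
    (hq : Tendsto (fun s => {x | q x < s}) (𝓝 0) (𝓝 x₀).smallSets) :
    ∀ᶠ t in 𝓝[>] 0,
      {x | q x < t / (1 + ε)} ⊆ {x | f x < t} ∧ {x | f x < t} ⊆ {x | q x < t / (1 - ε)} := by
  have hdiv : Tendsto (fun t : ℝ => t / (1 + ε)) (𝓝[>] 0) (𝓝 0) := by
    simpa using ((tendsto_id (x := 𝓝 (0 : ℝ))).div_const (1 + ε)).mono_left nhdsWithin_le_nhds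
  filter_upwards [(hq.comp hdiv).eventually (eventually_smallSets_forall.2 happrox),
    hf.eventually (eventually_smallSets_forall.2 happrox)] with t hinner houter
  constructor
  · intro x hx
    have hqx : q x * (1 + ε) < t := (lt_div_iff₀ (by linarith)).1 hx
    have := (abs_le.1 (hinner x hx)).2
    change f x < t
    linarith
  · intro x hx
    have := (abs_le.1 (houter x hx)).1
    change f x < t at hx
    change q x < t / (1 - ε)
    rw [lt_div_iff₀ (by linarith)]
    linarith

theorem rpow_neg_div_two_mul_sqrt_pow (k : ℕ) {t : ℝ} (ht : 0 < t) :
    t ^ (-(k : ℝ) / 2) * √t ^ k = 1 := by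
  rw [Real.sqrt_eq_rpow, ← Real.rpow_natCast, ← Real.rpow_mul ht.le, ← Real.rpow_add ht]
  convert Real.rpow_zero t using 2
  ring

theorem isLittleO_sub_taylor_two {E F : Type*} [NormedAddCommGroup E] [NormedSpace ℝ E]
    [NormedAddCommGroup F] [NormedSpace ℝ F] {f : E → F}
    (hf : ∀ᶠ y in 𝓝 0, DifferentiableAt ℝ f y) (hf' : DifferentiableAt ℝ (fderiv ℝ f) 0) :
    (fun x => f x - f 0 - fderiv ℝ f 0 x - (2⁻¹ : ℝ) • fderiv ℝ (fderiv ℝ f) 0 x x) =o[𝓝 0]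
      fun x => ‖x‖ ^ 2 := by
  set A := fderiv ℝ (fderiv ℝ f) 0
  refine isLittleO_iff.2 fun ε hε => ?_
  have hlin : ∀ᶠ y in 𝓝 (0 : E), ‖fderiv ℝ f y - fderiv ℝ f 0 - A y‖ ≤ ε * ‖y‖ := by
    simpa using (hasFDerivAt_iff_isLittleO_nhds_zero.1 hf'.hasFDerivAt).def hε
  obtain ⟨δ, hδ, hball⟩ := Metric.eventually_nhds_iff_ball.1 (hf.and hlin)
  filter_upwards [Metric.ball_mem_nhds 0 hδ] with x hx
  have hnorm : ∀ s ∈ Icc (0 : ℝ) 1, ‖s • x‖ ≤ ‖x‖ := fun s hs => by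
    rw [norm_smul, Real.norm_of_nonneg hs.1]
    exact mul_le_of_le_one_left (norm_nonneg x) hs.2
  have hsx : ∀ s ∈ Icc (0 : ℝ) 1, s • x ∈ Metric.ball (0 : E) δ := fun s hs =>
    mem_ball_zero_iff.2 ((hnorm s hs).trans_lt (mem_ball_zero_iff.1 hx))
  let g : ℝ → F := fun s => f (s • x) - s • fderiv ℝ f 0 x - (s ^ 2 / 2) • A x x
  have hg : ∀ s ∈ Icc (0 : ℝ) 1, HasDerivWithinAt g
      ((fderiv ℝ f (s • x) - fderiv ℝ f 0 - A (s • x)) x) (Icc 0 1) s := fun s hs => by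
    have hfs := (hball _ (hsx s hs)).1.hasFDerivAt.comp_hasDerivAt s
      ((hasDerivAt_id s).smul_const x)
    have := (hfs.sub ((hasDerivAt_id s).smul_const (fderiv ℝ f 0 x))).sub
      (((hasDerivAt_pow 2 s).div_const 2).smul_const (A x x))
    refine (this.congr_deriv ?_).hasDerivWithinAt
    simp only [one_smul, _root_.sub_apply, map_smul, _root_.smul_apply]
    norm_num
  have hg' : ∀ s ∈ Ico (0 : ℝ) 1,
      ‖(fderiv ℝ f (s • x) - fderiv ℝ f 0 - A (s • x)) x‖ ≤ ε * ‖x‖ ^ 2 := fun s hs => by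
    have hs' := Ico_subset_Icc_self hs
    calc _ ≤ ‖fderiv ℝ f (s • x) - fderiv ℝ f 0 - A (s • x)‖ * ‖x‖ :=
          ContinuousLinearMap.le_opNorm _ x
      _ ≤ ε * ‖s • x‖ * ‖x‖ := by gcongr; exact (hball _ (hsx s hs')).2
      _ ≤ ε * ‖x‖ * ‖x‖ := by gcongr; exact hnorm s hs'
      _ = ε * ‖x‖ ^ 2 := by ring
  rw [norm_pow, norm_norm]
  convert norm_image_sub_le_of_norm_deriv_le_segment_01' hg hg' using 2
  simp only [g, one_smul, zero_smul, one_pow, zero_pow two_ne_zero, zero_div, sub_zero]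
  module

namespace Matrix

variable {ι : Type*} [Fintype ι] [DecidableEq ι] {H : Matrix ι ι ℝ}

open scoped MatrixOrder in
theorem PosSemidef.exists_linearMap_norm_sq_eq (hH : H.PosSemidef) :
    ∃ T : EuclideanSpace ℝ ι →ₗ[ℝ] EuclideanSpace ℝ ι,
      |LinearMap.det T| = √H.det ∧ ∀ x : EuclideanSpace ℝ ι, ‖T x‖ ^ 2 = x ⬝ᵥ H *ᵥ x := by
  obtain ⟨B, rfl⟩ := CStarAlgebra.nonneg_iff_eq_star_mul_self.mp hH.nonneg
  refine ⟨toLpLin 2 2 B, ?_, fun x => ?_⟩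
  · rw [toLpLin_eq_toLin, LinearMap.det_toLin, det_mul, star_eq_conjTranspose, det_conjTranspose,
      star_trivial, ← sq, Real.sqrt_sq_eq_abs]
  · rw [toLpLin_apply, ← real_inner_self_eq_norm_sq, EuclideanSpace.inner_toLp_toLp,
      star_eq_conjTranspose, ← mulVec_mulVec, dotProduct_mulVec, vecMul_conjTranspose, star_trivial,
      dotProduct_comm]
    rfl

theorem PosDef.exists_pos_mul_norm_sq_le (hH : H.PosDef) :
    ∃ m > 0, ∀ x : EuclideanSpace ℝ ι, m * ‖x‖ ^ 2 ≤ x ⬝ᵥ H *ᵥ x := by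
  obtain ⟨T, hdet, hT⟩ := hH.posSemidef.exists_linearMap_norm_sq_eq
  have hdet0 : LinearMap.det T ≠ 0 := by
    rw [← abs_pos, hdet]; exact Real.sqrt_pos.2 hH.det_pos
  let e := (LinearMap.equivOfDetNeZero T hdet0).toContinuousLinearEquiv
  obtain ⟨C, hC, hbound⟩ := (e.symm : EuclideanSpace ℝ ι →L[ℝ] EuclideanSpace ℝ ι).bound
  refine ⟨(C ^ 2)⁻¹, by positivity, fun x => ?_⟩
  have hx : ‖x‖ ≤ C * ‖T x‖ := by
    have := hbound (e x)
    rwa [ContinuousLinearEquiv.coe_coe, e.symm_apply_apply] at this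
  rw [← hT, inv_mul_le_iff₀ (by positivity), ← mul_pow]
  exact pow_le_pow_left₀ (norm_nonneg x) hx 2

theorem PosDef.volume_setOf_dotProduct_mulVec_lt (hH : H.PosDef) {s : ℝ} (hs : 0 < s) :
    volume {x : EuclideanSpace ℝ ι | x ⬝ᵥ H *ᵥ x < s} =
      ENNReal.ofReal (√s ^ Fintype.card ι / √H.det) *
        volume (Metric.ball (0 : EuclideanSpace ℝ ι) 1) := by
  obtain ⟨T, hdet, hT⟩ := hH.posSemidef.exists_linearMap_norm_sq_eq
  have hdet0 : LinearMap.det T ≠ 0 := by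
    rw [← abs_pos, hdet]; exact Real.sqrt_pos.2 hH.det_pos
  have hset : {x : EuclideanSpace ℝ ι | x ⬝ᵥ H *ᵥ x < s} = T ⁻¹' Metric.ball 0 √s := by
    ext x
    simp only [mem_ofPred_eq, mem_preimage, mem_ball_zero_iff, ← hT,
      Real.lt_sqrt (norm_nonneg _)]
  rw [hset, Measure.addHaar_preimage_linearMap _ hdet0,
    Measure.addHaar_ball_of_pos _ _ (Real.sqrt_pos.2 hs), finrank_euclideanSpace, ← mul_assoc,
    ← ENNReal.ofReal_mul (abs_nonneg _), abs_inv, hdet, inv_mul_eq_div]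

theorem PosDef.rpow_mul_measureReal_setOf_lt_mul (hH : H.PosDef) {c t : ℝ} (hc : 0 < c)
    (ht : 0 < t) :
    t ^ (-(Fintype.card ι : ℝ) / 2) * volume.real {x : EuclideanSpace ℝ ι | x ⬝ᵥ H *ᵥ x < c * t} =
      √c ^ Fintype.card ι * volume.real (Metric.ball (0 : EuclideanSpace ℝ ι) 1) / √H.det := by
  rw [measureReal_def, hH.volume_setOf_dotProduct_mulVec_lt (by positivity), ENNReal.toReal_mul,
    ENNReal.toReal_ofReal (by positivity), ← measureReal_def, Real.sqrt_mul hc.le, mul_pow]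
  linear_combination (√c ^ Fintype.card ι * volume.real (Metric.ball (0 : EuclideanSpace ℝ ι) 1) /
    √H.det) * rpow_neg_div_two_mul_sqrt_pow (Fintype.card ι) ht

theorem PosDef.rpow_mul_setIntegral_mem_Icc (hH : H.PosDef) {S : Set (EuclideanSpace ℝ ι)}
    {g : EuclideanSpace ℝ ι → ℝ} {t ε : ℝ} (ht : 0 < t) (hε₀ : 0 ≤ ε) (hε₁ : ε < 1)
    (hS : MeasurableSet S) (hg : AEStronglyMeasurable g (volume.restrict S))
    (hg₁ : ∀ x ∈ S, 1 ≤ g x) (hgε : ∀ x ∈ S, g x ≤ 1 + ε)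
    (h₁ : {x : EuclideanSpace ℝ ι | x ⬝ᵥ H *ᵥ x / 2 < t / (1 + ε)} ⊆ S)
    (h₂ : S ⊆ {x : EuclideanSpace ℝ ι | x ⬝ᵥ H *ᵥ x / 2 < t / (1 - ε)}) :
    t ^ (-(Fintype.card ι : ℝ) / 2) * ∫ x in S, g x ∈
      Icc (√(2 / (1 + ε)) ^ Fintype.card ι *
          volume.real (Metric.ball (0 : EuclideanSpace ℝ ι) 1) / √H.det)
        ((1 + ε) * (√(2 / (1 - ε)) ^ Fintype.card ι *
          volume.real (Metric.ball (0 : EuclideanSpace ℝ ι) 1) / √H.det)) := by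
  have hset : ∀ c : ℝ, {x : EuclideanSpace ℝ ι | x ⬝ᵥ H *ᵥ x / 2 < t / c} =
      {x : EuclideanSpace ℝ ι | x ⬝ᵥ H *ᵥ x < 2 / c * t} := fun c => by
    ext x
    rw [mem_ofPred_eq, mem_ofPred_eq, div_lt_iff₀ two_pos, show t / c * 2 = 2 / c * t by ring]
  rw [hset] at h₁ h₂
  have h1ε : 0 < 1 - ε := by linarith
  have hfin : volume {x : EuclideanSpace ℝ ι | x ⬝ᵥ H *ᵥ x < 2 / (1 - ε) * t} ≠ ⊤ := by
    rw [hH.volume_setOf_dotProduct_mulVec_lt (by positivity)]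
    exact ENNReal.mul_ne_top ENNReal.ofReal_ne_top measure_ball_lt_top.ne
  obtain ⟨hlow, hupp⟩ := mul_measureReal_le_setIntegral_and_le zero_le_one (by linarith) h₁ h₂
    hfin hS hg hg₁ hgε
  have htpos : 0 < t ^ (-(Fintype.card ι : ℝ) / 2) := Real.rpow_pos_of_pos ht _
  constructor
  · rw [← hH.rpow_mul_measureReal_setOf_lt_mul (by positivity) ht, ← one_mul (volume.real _)]
    gcongr
  · rw [← hH.rpow_mul_measureReal_setOf_lt_mul (by positivity) ht, mul_left_comm]
    gcongr

end Matrix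

section Hessian

variable {n : ℕ} {f : EuclideanSpace ℝ (Fin n) → ℝ}

theorem fderiv_fderiv_apply_eq_dotProduct_hessianMatrix (f : EuclideanSpace ℝ (Fin n) → ℝ)
    (x v : EuclideanSpace ℝ (Fin n)) :
    fderiv ℝ (fderiv ℝ f) x v v = v ⬝ᵥ hessianMatrix f x *ᵥ v := by
  let b := (EuclideanSpace.basisFun (Fin n) ℝ).toBasis
  have hH : hessianMatrix f x =
      LinearMap.toMatrix₂ b b (fderiv ℝ (fderiv ℝ f) x).toLinearMap₁₂ := by
    ext i j
    simp [b, hessianMatrix, iteratedFDeriv_two_apply]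
  rw [hH, ← ContinuousLinearMap.toLinearMap₁₂_apply_apply_apply,
    apply_eq_dotProduct_toMatrix₂_mulVec b b]
  rfl

theorem eventually_abs_sub_le_of_posDef_hessianMatrix (hf : ContDiff ℝ 2 f) (hf0 : f 0 = 0)
    (hgrad : fderiv ℝ f 0 = 0) (hH : (hessianMatrix f 0).PosDef) {ε : ℝ} (hε : 0 < ε) :
    ∀ᶠ x in 𝓝 0, |f x - x ⬝ᵥ hessianMatrix f 0 *ᵥ x / 2| ≤
      ε * (x ⬝ᵥ hessianMatrix f 0 *ᵥ x / 2) := by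
  obtain ⟨m, hm, hQ⟩ := hH.exists_pos_mul_norm_sq_le
  have hdiff' : Differentiable ℝ (fderiv ℝ f) :=
    (hf.fderiv_right (m := 1) (by norm_num)).differentiable (by norm_num)
  have htaylor := isLittleO_sub_taylor_two (.of_forall (hf.differentiable (by norm_num)))
    (hdiff' 0)
  filter_upwards [htaylor.def (by positivity : 0 < ε * m / 2)] with x hx
  rw [hf0, hgrad, fderiv_fderiv_apply_eq_dotProduct_hessianMatrix] at hx
  simp only [sub_zero, _root_.zero_apply, smul_eq_mul, Real.norm_eq_abs, abs_pow, abs_norm] at hx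
  calc _ = |f x - 2⁻¹ * (x ⬝ᵥ hessianMatrix f 0 *ᵥ x)| := by ring_nf
    _ ≤ ε * m / 2 * ‖x‖ ^ 2 := hx
    _ ≤ _ := by nlinarith [hQ x]

theorem tendsto_setOf_lt_smallSets_of_posDef_hessianMatrix (hf : ContDiff ℝ 2 f)
    (hconv : ConvexOn ℝ univ f) (hf0 : f 0 = 0) (hgrad : fderiv ℝ f 0 = 0)
    (hH : (hessianMatrix f 0).PosDef) :
    Tendsto (fun t => {x | f x < t}) (𝓝[>] 0) (𝓝 0).smallSets := by
  obtain ⟨m, hm, hQ⟩ := hH.exists_pos_mul_norm_sq_le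
  refine hf0 ▸ hconv.tendsto_setOf_lt_smallSets (by positivity : 0 < m / 4) ?_
  filter_upwards [eventually_abs_sub_le_of_posDef_hessianMatrix hf hf0 hgrad hH one_half_pos]
    with x hx
  rw [hf0, dist_zero_right]
  linarith [abs_le.1 hx, hQ x]

theorem eventually_rpow_mul_setIntegral_setOf_lt_mem_Icc (hf : ContDiff ℝ 2 f)
    (hconv : ConvexOn ℝ univ f) (hf0 : f 0 = 0) (hgrad : gradient f 0 = 0)
    (hH : (hessianMatrix f 0).PosDef) {ε : ℝ} (hε₀ : 0 < ε) (hε₁ : ε < 1) :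
    ∀ᶠ t in 𝓝[>] 0, t ^ (-(n : ℝ) / 2) * ∫ x in {x | f x < t}, √(1 + ‖gradient f x‖ ^ 2) ∈
      Icc (√(2 / (1 + ε)) ^ n * volume.real (Metric.ball (0 : EuclideanSpace ℝ (Fin n)) 1) /
          √(hessianMatrix f 0).det)
        ((1 + ε) * (√(2 / (1 - ε)) ^ n *
          volume.real (Metric.ball (0 : EuclideanSpace ℝ (Fin n)) 1) /
            √(hessianMatrix f 0).det)) := by
  have hfderiv : fderiv ℝ f 0 = 0 := by simpa [gradient] using hgrad
  have hshrink := tendsto_setOf_lt_smallSets_of_posDef_hessianMatrix hf hconv hf0 hfderiv hH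
  obtain ⟨m, hm, hQ⟩ := hH.exists_pos_mul_norm_sq_le
  have hQshrink := tendsto_setOf_lt_smallSets_of_mul_norm_sq_le (by positivity : 0 < m / 2)
    (q := fun x : EuclideanSpace ℝ (Fin n) => x ⬝ᵥ hessianMatrix f 0 *ᵥ x / 2)
    fun x => by linarith [hQ x]
  have hg : Continuous fun x => √(1 + ‖gradient f x‖ ^ 2) := by
    have := (InnerProductSpace.toDual ℝ _).symm.continuous.comp (hf.continuous_fderiv (by simp))
    exact (continuous_const.add (this.norm.pow 2)).sqrt
  have hg0 : Tendsto (fun x => √(1 + ‖gradient f x‖ ^ 2)) (𝓝 0) (𝓝 1) := by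
    simpa [hgrad] using hg.tendsto 0
  filter_upwards [self_mem_nhdsWithin,
    eventually_setOf_lt_subset_and_subset hε₀.le hε₁
      (eventually_abs_sub_le_of_posDef_hessianMatrix hf hf0 hfderiv hH hε₀) hshrink hQshrink,
    hshrink.eventually (eventually_smallSets_forall.2
      (hg0.eventually (eventually_lt_nhds (by linarith : (1 : ℝ) < 1 + ε))))]
    with t ht ⟨h₁, h₂⟩ hgε
  simpa only [Fintype.card_fin] using hH.rpow_mul_setIntegral_mem_Icc ht hε₀.le hε₁
    (isOpen_lt hf.continuous continuous_const).measurableSet hg.aestronglyMeasurable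
    (fun x _ => Real.one_le_sqrt.2 (le_add_of_nonneg_right (by positivity)))
    (fun x hx => (hgε x hx).le) h₁ h₂

end Hessian

theorem surface_area_limit_general (n : ℕ) (f : EuclideanSpace ℝ (Fin n) → ℝ)
    (hf : ContDiff ℝ (⊤ : ℕ∞) f) (hconv : ConvexOn ℝ Set.univ f)
    (hf0 : f 0 = 0) (hgrad : gradient f 0 = 0)
    (hhess : (hessianMatrix f 0).PosDef) :
    Tendsto (fun t : ℝ => t ^ (-(n : ℝ) / 2) *
        ∫ x in {x | f x < t}, Real.sqrt (1 + ‖gradient f x‖ ^ 2))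
      (𝓝[>] 0)
      (𝓝 (Real.sqrt 2 ^ n *
        (volume (Metric.ball (0 : EuclideanSpace ℝ (Fin n)) 1)).toReal /
        Real.sqrt (hessianMatrix f 0).det)) := by
  rw [← measureReal_def]
  set ω := volume.real (Metric.ball (0 : EuclideanSpace ℝ (Fin n)) 1)
  set d := (hessianMatrix f 0).det
  refine tendsto_of_forall_eventually_mem_Icc (l' := 𝓝[>] 0)
    (a := fun ε => √(2 / (1 + ε)) ^ n * ω / √d)
    (b := fun ε => (1 + ε) * (√(2 / (1 - ε)) ^ n * ω / √d)) ?_ ?_ ?_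
  · have : ContinuousAt (fun ε : ℝ => √(2 / (1 + ε)) ^ n * ω / √d) 0 := by
      fun_prop (disch := norm_num)
    simpa using tendsto_nhdsWithin_of_tendsto_nhds this.tendsto
  · have : ContinuousAt (fun ε : ℝ => (1 + ε) * (√(2 / (1 - ε)) ^ n * ω / √d)) 0 := by
      fun_prop (disch := norm_num)
    simpa using tendsto_nhdsWithin_of_tendsto_nhds this.tendsto
  filter_upwards [Ioo_mem_nhdsGT one_pos] with ε ⟨hε₀, hε₁⟩
  exact eventually_rpow_mul_setIntegral_setOf_lt_mem_Icc (hf.of_le (WithTop.coe_le_coe.2 le_top))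
    hconv hf0 hgrad hhess hε₀ hε₁

theorem surface_area_limit (n : ℕ) (hn : 1 ≤ n) (f : EuclideanSpace ℝ (Fin n) → ℝ)
    (hf : ContDiff ℝ (⊤ : ℕ∞) f) (hconv : ConvexOn ℝ Set.univ f)
    (hf0 : f 0 = 0) (hgrad : gradient f 0 = 0)
    (hhess : (hessianMatrix f 0).PosDef) :
    Tendsto (fun t : ℝ => t ^ (-(n : ℝ) / 2) *
        ∫ x in {x | f x < t}, Real.sqrt (1 + ‖gradient f x‖ ^ 2))
      (𝓝[>] 0)
      (𝓝 (Real.sqrt 2 ^ n *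
        (volume (Metric.ball (0 : EuclideanSpace ℝ (Fin n)) 1)).toReal /
        Real.sqrt (hessianMatrix f 0).det)) :=
  surface_area_limit_general n f hf hconv hf0 hgrad hhess
end

section
/- Let n ≥ 1, let g : (0,∞) → ℝ, and let f : ℝⁿ → ℝ be a continuous positive function satisfying ∫_{B(q,r)} f(y) dy = f(q) · g(r) for all q ∈ ℝⁿ and all r > 0. If f has a local minimum at some point q₀ ∈ ℝⁿ, then there exists r₀ > 0 such that g(r) ≥ ω_n · rⁿ for all 0 < r < r₀, where ω_n is the Lebesgue measure of the unit ball in ℝⁿ. -/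
/-!
Near a local minimum `q₀` the integrand is at least `f q₀` on small balls, so the mean value
identity gives `f q₀ * g r = ∫_{B(q₀,r)} f ≥ f q₀ * |B(q₀,r)| = f q₀ * ω_n rⁿ`, and one divides
by `f q₀ > 0`.
-/

open MeasureTheory Metric Module

theorem MeasureTheory.Measure.addHaar_real_ball_of_pos {E : Type*} [NormedAddCommGroup E]
    [NormedSpace ℝ E] [MeasurableSpace E] [BorelSpace E] [FiniteDimensional ℝ E]
    (μ : Measure E) [μ.IsAddHaarMeasure] (x : E) {r : ℝ} (hr : 0 < r) :
    μ.real (ball x r) = r ^ finrank ℝ E * μ.real (ball 0 1) := by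
  rw [measureReal_def, μ.addHaar_ball_of_pos x hr, ENNReal.toReal_mul,
    ENNReal.toReal_ofReal (by positivity), measureReal_def]

theorem IsLocalMin.exists_mul_measureReal_ball_le_setIntegral {X : Type*} [MetricSpace X]
    [ProperSpace X] [MeasurableSpace X] [OpensMeasurableSpace X] {f : X → ℝ} {q : X}
    (hq : IsLocalMin f q) (hf : Continuous f) (μ : Measure X) [IsFiniteMeasureOnCompacts μ] :
    ∃ r₀ > 0, ∀ r ≤ r₀, f q * μ.real (ball q r) ≤ ∫ y in ball q r, f y ∂μ := by
  obtain ⟨r₀, hr₀, hmin⟩ := eventually_nhds_iff_ball.mp hq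
  refine ⟨r₀, hr₀, fun r hr => ?_⟩
  have hint : IntegrableOn f (ball q r) μ :=
    (hf.continuousOn.integrableOn_compact (isCompact_closedBall q r)).mono_set
      ball_subset_closedBall
  exact setIntegral_ge_of_const_le_real measurableSet_ball measure_ball_lt_top.ne
    (fun y hy => hmin y (ball_subset_ball hr hy)) hint

theorem mean_value_local_min_general (n : ℕ) (g : ℝ → ℝ)
    (f : EuclideanSpace ℝ (Fin n) → ℝ) (hf : Continuous f) (hpos : ∀ x, 0 < f x)
    (hmean : ∀ (q : EuclideanSpace ℝ (Fin n)) (r : ℝ), 0 < r →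
      (∫ y in Metric.ball q r, f y) = f q * g r)
    (q₀ : EuclideanSpace ℝ (Fin n)) (hq₀ : IsLocalMin f q₀) :
    ∃ r₀ > 0, ∀ r : ℝ, 0 < r → r < r₀ →
      (volume (Metric.ball (0 : EuclideanSpace ℝ (Fin n)) 1)).toReal * r ^ n ≤ g r := by
  obtain ⟨r₀, hr₀, hle⟩ := hq₀.exists_mul_measureReal_ball_le_setIntegral hf volume
  refine ⟨r₀, hr₀, fun r hr hrr₀ => ?_⟩
  have h := hle r hrr₀.le
  rw [hmean q₀ r hr, Measure.addHaar_real_ball_of_pos volume q₀ hr, finrank_euclideanSpace_fin,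
    measureReal_def, mul_comm (r ^ n)] at h
  exact le_of_mul_le_mul_left h (hpos q₀)

theorem mean_value_local_min (n : ℕ) (hn : 1 ≤ n) (g : ℝ → ℝ)
    (f : EuclideanSpace ℝ (Fin n) → ℝ) (hf : Continuous f) (hpos : ∀ x, 0 < f x)
    (hmean : ∀ (q : EuclideanSpace ℝ (Fin n)) (r : ℝ), 0 < r →
      (∫ y in Metric.ball q r, f y) = f q * g r)
    (q₀ : EuclideanSpace ℝ (Fin n)) (hq₀ : IsLocalMin f q₀) :
    ∃ r₀ > 0, ∀ r : ℝ, 0 < r → r < r₀ →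
      (volume (Metric.ball (0 : EuclideanSpace ℝ (Fin n)) 1)).toReal * r ^ n ≤ g r :=
  mean_value_local_min_general n g f hf hpos hmean q₀ hq₀
end
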